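/- Let δ > 0. Suppose there exists a bounded Borel measurable function v : 𝒳̂ → ℝ with v(x) ≥ 0 for all x ∈ 𝒳̂ and 𝔼^∞[v(φ_π^{x}(1))] − v(x) ≤ −δ for all x ∈ 𝒳. Then the system leaves the safe set almost surely from every safe initial state: for every x₀ ∈ 𝒳, ℙ^∞(∀k ∈ ℕ: φ_π^{x₀}(k) ∈ 𝒳) = 0. -/

import Mathlib

open MeasureTheory Filter Topology

noncomputable section

/-- Trajectory of the discrete-time system `x(l+1) = f(x(l), d(l))` under the
disturbance sequence `π`, starting from `x0`. -/
def traj {n m : ℕ} (f : (Fin n → ℝ) → (Fin m → ℝ) → (Fin n → ℝ))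
    (x0 : Fin n → ℝ) (π : ℕ → Fin m → ℝ) : ℕ → Fin n → ℝ
  | 0 => x0
  | k + 1 => f (traj f x0 π k) (π k)

lemma traj_congr {n m : ℕ} (f : (Fin n → ℝ) → (Fin m → ℝ) → (Fin n → ℝ))
    (x0 : Fin n → ℝ) {π π' : ℕ → Fin m → ℝ} :
    ∀ {k : ℕ}, (∀ i < k, π i = π' i) → traj f x0 π k = traj f x0 π' k
  | 0, _ => rfl
  | k + 1, h => by
      have ih := traj_congr f x0 (π := π) (π' := π') (k := k)
        (fun i hi => h i (Nat.lt_succ_of_lt hi))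
      simp [traj, ih, h k (Nat.lt_succ_self k)]

lemma measurable_traj {n m : ℕ} {f : (Fin n → ℝ) → (Fin m → ℝ) → (Fin n → ℝ)}
    (hf : Measurable fun p : (Fin n → ℝ) × (Fin m → ℝ) => f p.1 p.2)
    (x0 : Fin n → ℝ) : ∀ k : ℕ, Measurable fun π : ℕ → Fin m → ℝ => traj f x0 π k
  | 0 => measurable_const
  | k + 1 => by
      have ih := measurable_traj hf x0 k
      exact hf.comp (ih.prodMk (measurable_pi_apply k))

/-- Extension of a finite disturbance vector to an infinite sequence (by `0`). -/
def ext' (m k : ℕ) (y : Fin k → Fin m → ℝ) : ℕ → Fin m → ℝ :=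
  fun i => if h : i < k then y ⟨i, h⟩ else 0

lemma measurable_ext' (m k : ℕ) : Measurable (ext' m k) := by
  apply measurable_pi_lambda
  intro i
  by_cases h : i < k
  · simpa [ext', h] using measurable_pi_apply (⟨i, h⟩ : Fin k)
  · simpa [ext', h] using @measurable_const (Fin m → ℝ) _ _ _ 0

/-- Identification of the finite-dimensional marginals of `Pinf` with product measures. -/
lemma map_proj_eq {m : ℕ}
    (μ : Measure (Fin m → ℝ)) [IsProbabilityMeasure μ]
    (Pinf : Measure (ℕ → Fin m → ℝ)) [IsProbabilityMeasure Pinf]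
    (hPinf : ∀ (s : Finset ℕ) (B : ℕ → Set (Fin m → ℝ)), (∀ i, MeasurableSet (B i)) →
      Pinf {π : ℕ → Fin m → ℝ | ∀ i ∈ s, π i ∈ B i} = ∏ i ∈ s, μ (B i))
    (k : ℕ) :
    Measure.map (fun (π : ℕ → Fin m → ℝ) (i : Fin k) => π i) Pinf
      = Measure.pi (fun _ : Fin k => μ) := by
  refine (Measure.pi_eq fun s hs => ?_).symm
  have hmeas : Measurable fun (π : ℕ → Fin m → ℝ) (i : Fin k) => π i :=
    measurable_pi_lambda _ fun i => measurable_pi_apply _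
  rw [Measure.map_apply hmeas (MeasurableSet.univ_pi hs)]
  set B : ℕ → Set (Fin m → ℝ) := fun i => if h : i < k then s ⟨i, h⟩ else Set.univ with hB
  have hpre : (fun (π : ℕ → Fin m → ℝ) (i : Fin k) => π i) ⁻¹' Set.pi Set.univ s
      = {π : ℕ → Fin m → ℝ | ∀ i ∈ Finset.range k, π i ∈ B i} := by
    ext π
    simp only [Set.mem_preimage, Set.mem_pi, Set.mem_univ, forall_true_left, Set.mem_setOf_eq,
      Finset.mem_range, hB]
    constructor
    · intro h i hi
      simpa [dif_pos hi] using h ⟨i, hi⟩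
    · intro h i
      simpa [dif_pos i.isLt] using h i i.isLt
  rw [hpre, hPinf _ B (by
    intro i
    by_cases h : i < k
    · simpa [hB, dif_pos h] using hs ⟨i, h⟩
    · simp [hB, dif_neg h])]
  rw [← Fin.prod_univ_eq_prod_range (fun i => μ (B i)) k]
  exact Finset.prod_congr rfl fun i _ => by simp [hB, dif_pos i.isLt]

/-- Remark 2: a bounded nonnegative strict-drift certificate forces the
system to leave the safe set almost surely. -/
theorem statement_5 {n m : ℕ}
    (f : (Fin n → ℝ) → (Fin m → ℝ) → (Fin n → ℝ))
    (hf : Measurable fun p : (Fin n → ℝ) × (Fin m → ℝ) => f p.1 p.2)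
    (D : Set (Fin m → ℝ)) (hD : MeasurableSet D)
    (μ : Measure (Fin m → ℝ)) [IsProbabilityMeasure μ] (hμD : μ D = 1)
    (Pinf : Measure (ℕ → Fin m → ℝ)) [IsProbabilityMeasure Pinf]
    (hPinf : ∀ (s : Finset ℕ) (B : ℕ → Set (Fin m → ℝ)), (∀ i, MeasurableSet (B i)) →
      Pinf {π : ℕ → Fin m → ℝ | ∀ i ∈ s, π i ∈ B i} = ∏ i ∈ s, μ (B i))
    (X Xhat : Set (Fin n → ℝ))
    (hX : MeasurableSet X) (hXhat : MeasurableSet Xhat)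
    (hXXhat : X ⊆ Xhat)
    (hreach : ∀ x ∈ X, ∀ d ∈ D, f x d ∈ Xhat)
    (δ : ℝ) (hδ : 0 < δ)
    (v : (Fin n → ℝ) → ℝ) (hv : Measurable v)
    (hvb : ∃ C, ∀ x ∈ Xhat, |v x| ≤ C)
    (hv0 : ∀ x ∈ Xhat, 0 ≤ v x)
    (hdrift : ∀ x ∈ X, (∫ d in D, v (f x d) ∂μ) - v x ≤ -δ) :
    ∀ x0 ∈ X,
      Pinf {π : ℕ → Fin m → ℝ | ∀ k : ℕ, traj f x0 π k ∈ X} = 0 := by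
  intro x0 hx0
  obtain ⟨C, hC⟩ := hvb
  set C' : ℝ := max C 0 with hC'
  have hC'0 : 0 ≤ C' := le_max_right _ _
  -- the truncated certificate, bounded and nonnegative everywhere
  set w : (Fin n → ℝ) → ℝ := fun x => max 0 (min (v x) C) with hw
  have hw_meas : Measurable w := measurable_const.max (hv.min measurable_const)
  have hw_nonneg : ∀ x, 0 ≤ w x := fun x => le_max_left _ _
  have hw_le : ∀ x, w x ≤ C' :=
    fun x => max_le hC'0 ((min_le_right _ _).trans (le_max_left _ _))
  have hw_abs : ∀ x, |w x| ≤ C' := fun x => abs_le.mpr ⟨by linarith [hw_nonneg x], hw_le x⟩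
  have hw_eq : ∀ x ∈ Xhat, w x = v x := by
    intro x hx
    have h1 := hv0 x hx
    have h2 := (abs_le.mp (hC x hx)).2
    simp [hw, min_eq_left h2, max_eq_right h1]
  have hw_drift : ∀ x ∈ X, (∫ d in D, w (f x d) ∂μ) ≤ w x - δ := by
    intro x hx
    have h1 : ∫ d in D, w (f x d) ∂μ = ∫ d in D, v (f x d) ∂μ := by
      apply setIntegral_congr_fun hD
      intro d hd
      exact hw_eq _ (hreach x hx d hd)
    rw [h1, hw_eq x (hXXhat hx)]
    linarith [hdrift x hx]
  have hμDc : μ Dᶜ = 0 := by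
    rw [measure_compl hD (measure_ne_top μ D), measure_univ, hμD, tsub_self]
  -- for bounded measurable functions, the integral over D is the full integral
  have hfull : ∀ g : (Fin m → ℝ) → ℝ, Measurable g → (∀ d, |g d| ≤ C') →
      ∫ d, g d ∂μ = ∫ d in D, g d ∂μ := by
    intro g hg hgb
    have hint : Integrable g μ := by
      refine (integrable_const C').mono' hg.aestronglyMeasurable ?_
      filter_upwards with d using by simpa [Real.norm_eq_abs] using hgb d
    have h0 : ∫ d in Dᶜ, g d ∂μ = 0 := by
      rw [Measure.restrict_eq_zero.mpr hμDc, integral_zero_measure]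
    rw [← integral_add_compl hD hint, h0, add_zero]
  -- the events of staying safe up to time k
  set B : ℕ → Set (ℕ → Fin m → ℝ) :=
    fun k => {π | ∀ j ≤ k, traj f x0 π j ∈ X} with hBdef
  have hBmeas : ∀ k, MeasurableSet (B k) := by
    intro k
    have : B k = ⋂ j ∈ Set.Iic k, (fun π => traj f x0 π j) ⁻¹' X := by
      ext π; simp [hBdef]
    rw [this]
    exact MeasurableSet.biInter (Set.to_countable _)
      fun j _ => (measurable_traj hf x0 j) hX
  set S : ℕ → ℝ := fun k => ∫ π in B k, w (traj f x0 π k) ∂Pinf with hSdef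
  have hint_k : ∀ k, Integrable (fun π => w (traj f x0 π k)) Pinf := by
    intro k
    refine (integrable_const C').mono'
      ((hw_meas.comp (measurable_traj hf x0 k)).aestronglyMeasurable) ?_
    filter_upwards with π using by simpa [Real.norm_eq_abs] using hw_abs (traj f x0 π k)
  have hS_nonneg : ∀ k, 0 ≤ S k :=
    fun k => setIntegral_nonneg (hBmeas k) fun π _ => hw_nonneg _
  have hS0 : S 0 ≤ C' := by
    have h1 : S 0 ≤ ∫ π, w (traj f x0 π 0) ∂Pinf :=
      setIntegral_le_integral (hint_k 0) (Eventually.of_forall fun π => hw_nonneg _)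
    have h2 : ∫ π, w (traj f x0 π 0) ∂Pinf = w x0 := by
      simp [traj]
    rw [h2] at h1
    exact h1.trans (hw_le x0)
  -- the key supermartingale-type inequality
  have claim1 : ∀ k, S (k + 1) ≤ S k - δ * (Pinf (B k)).toReal := by
    intro k
    set pk : (ℕ → Fin m → ℝ) → (Fin k → Fin m → ℝ) := fun π i => π i with hpk
    set q : (ℕ → Fin m → ℝ) → (Fin m → ℝ) × (Fin k → Fin m → ℝ) :=
      fun π => (π k, pk π) with hq
    have hpkm : Measurable pk := measurable_pi_lambda _ fun i => measurable_pi_apply _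
    have hqm : Measurable q := (measurable_pi_apply k).prodMk hpkm
    set pik : Measure (Fin k → Fin m → ℝ) := Measure.pi (fun _ : Fin k => μ) with hpik
    have hmapk : Measure.map pk Pinf = pik := map_proj_eq μ Pinf hPinf k
    -- the (k+1)-dimensional marginal splits as a product
    have hmapq : Measure.map q Pinf = μ.prod pik := by
      set e := MeasurableEquiv.piFinSuccAbove (fun _ : Fin (k + 1) => (Fin m → ℝ))
        (Fin.last k) with he
      have hpe : MeasurePreserving e (Measure.pi fun _ : Fin (k + 1) => μ) (μ.prod pik) :=
        measurePreserving_piFinSuccAbove (fun _ : Fin (k + 1) => μ) (Fin.last k)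
      have hcomp : q = e ∘ (fun (π : ℕ → Fin m → ℝ) (i : Fin (k + 1)) => π i) := by
        funext π
        have : e (fun i : Fin (k + 1) => π i) = (π k, fun i : Fin k => π i) := by
          simp [he, MeasurableEquiv.piFinSuccAbove, Fin.removeNth, Fin.succAbove_last]
          funext i
          simp [Fin.init]
        simp [hq, hpk, Function.comp, this]
      rw [hcomp, ← Measure.map_map e.measurable
        (measurable_pi_lambda _ fun i => measurable_pi_apply _),
        map_proj_eq μ Pinf hPinf (k + 1), hpe.map_eq]
    -- finite-horizon versions of the state and the event
    set xk : (Fin k → Fin m → ℝ) → (Fin n → ℝ) :=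
      fun y => traj f x0 (ext' m k y) k with hxk
    set Bf : Set (Fin k → Fin m → ℝ) :=
      {y | ∀ j ≤ k, traj f x0 (ext' m k y) j ∈ X} with hBf
    have hxkm : Measurable xk := (measurable_traj hf x0 k).comp (measurable_ext' m k)
    have hBfm : MeasurableSet Bf := by
      have : Bf = ⋂ j ∈ Set.Iic k, (fun y => traj f x0 (ext' m k y) j) ⁻¹' X := by
        ext y; simp [hBf]
      rw [this]
      exact MeasurableSet.biInter (Set.to_countable _)
        fun j _ => ((measurable_traj hf x0 j).comp (measurable_ext' m k)) hX
    have hagree : ∀ (π : ℕ → Fin m → ℝ) (j : ℕ), j ≤ k →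
        traj f x0 (ext' m k (pk π)) j = traj f x0 π j := by
      intro π j hj
      apply traj_congr
      intro i hi
      have h : i < k := lt_of_lt_of_le hi hj
      simp [ext', h, hpk]
    have hmem : ∀ π, pk π ∈ Bf ↔ π ∈ B k := by
      intro π
      simp only [hBf, Set.mem_setOf_eq, hBdef]
      constructor
      · intro h j hj; rw [← hagree π j hj]; exact h j hj
      · intro h j hj; rw [hagree π j hj]; exact h j hj
    have hxkval : ∀ π, xk (pk π) = traj f x0 π k := fun π => hagree π k le_rfl
    set G : (Fin m → ℝ) × (Fin k → Fin m → ℝ) → ℝ :=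
      Set.indicator (Prod.snd ⁻¹' Bf) (fun z => w (f (xk z.2) z.1)) with hG
    have hGm : Measurable G :=
      Measurable.indicator
        (hw_meas.comp (hf.comp ((hxkm.comp measurable_snd).prodMk measurable_fst)))
        (hBfm.preimage measurable_snd)
    have hGb : ∀ z, |G z| ≤ C' := by
      intro z
      by_cases hz : z ∈ Prod.snd ⁻¹' Bf
      · rw [hG, Set.indicator_of_mem hz]; exact hw_abs _
      · rw [hG, Set.indicator_of_notMem hz]; simpa using hC'0
    have hpoint : ∀ π, (B k).indicator (fun π => w (traj f x0 π (k + 1))) π = G (q π) := by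
      intro π
      by_cases hπ : π ∈ B k
      · rw [Set.indicator_of_mem hπ]
        have h2 : q π ∈ Prod.snd ⁻¹' Bf := by
          simp only [hq, Set.mem_preimage]
          exact (hmem π).mpr hπ
        rw [hG, Set.indicator_of_mem h2]
        show w (traj f x0 π (k + 1)) = w (f (xk (pk π)) (π k))
        rw [hxkval]
        rfl
      · rw [Set.indicator_of_notMem hπ, hG, Set.indicator_of_notMem]
        simp only [hq, Set.mem_preimage]
        exact fun h => hπ ((hmem π).mp h)
    have hT1 : ∫ π in B k, w (traj f x0 π (k + 1)) ∂Pinf = ∫ z, G z ∂(μ.prod pik) := by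
      rw [← integral_indicator (hBmeas k)]
      calc ∫ π, (B k).indicator (fun π => w (traj f x0 π (k + 1))) π ∂Pinf
          = ∫ π, G (q π) ∂Pinf := integral_congr_ae (Eventually.of_forall hpoint)
        _ = ∫ z, G z ∂(Measure.map q Pinf) := by
            rw [integral_map hqm.aemeasurable hGm.aestronglyMeasurable]
        _ = ∫ z, G z ∂(μ.prod pik) := by rw [hmapq]
    have hGint : Integrable G (μ.prod pik) := by
      refine (integrable_const C').mono' hGm.aestronglyMeasurable ?_
      filter_upwards with z using by simpa [Real.norm_eq_abs] using hGb z
    have hfub : ∫ z, G z ∂(μ.prod pik) = ∫ y, ∫ d, G (d, y) ∂μ ∂pik :=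
      integral_prod_symm G hGint
    have hinner : ∀ y, ∫ d, G (d, y) ∂μ
        = Bf.indicator (fun y => ∫ d, w (f (xk y) d) ∂μ) y := by
      intro y
      by_cases hy : y ∈ Bf
      · rw [Set.indicator_of_mem hy]
        apply integral_congr_ae
        filter_upwards with d
        rw [hG, Set.indicator_of_mem (by simpa using hy : ((d, y) : _ × _) ∈ Prod.snd ⁻¹' Bf)]
      · rw [Set.indicator_of_notMem hy]
        have : ∀ d, G (d, y) = 0 := fun d =>
          Set.indicator_of_notMem (by simpa using hy) _
        simp [this]
    have hbound : ∀ y, Bf.indicator (fun y => ∫ d, w (f (xk y) d) ∂μ) y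
        ≤ Bf.indicator (fun y => w (xk y) - δ) y := by
      intro y
      by_cases hy : y ∈ Bf
      · rw [Set.indicator_of_mem hy, Set.indicator_of_mem hy]
        have hxX : xk y ∈ X := hy k le_rfl
        have hdr := hw_drift (xk y) hxX
        have heq : ∫ d, w (f (xk y) d) ∂μ = ∫ d in D, w (f (xk y) d) ∂μ :=
          hfull _ (hw_meas.comp (hf.comp (measurable_const.prodMk measurable_id)))
            (fun d => hw_abs _)
        rw [heq]; exact hdr
      · rw [Set.indicator_of_notMem hy, Set.indicator_of_notMem hy]
    have hRHSint : Integrable (fun y => Bf.indicator (fun y => w (xk y) - δ) y) pik := by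
      refine (integrable_const (C' + δ)).mono'
        (((hw_meas.comp hxkm).sub measurable_const).indicator hBfm).aestronglyMeasurable ?_
      filter_upwards with y
      by_cases hy : y ∈ Bf
      · rw [Set.indicator_of_mem hy]
        have := hw_abs (xk y)
        rw [Real.norm_eq_abs]
        have h1 := abs_sub (w (xk y)) δ
        calc |w (xk y) - δ| ≤ |w (xk y)| + |δ| := abs_sub _ _
          _ ≤ C' + δ := by rw [abs_of_pos hδ]; linarith
      · rw [Set.indicator_of_notMem hy]
        simp only [norm_zero]
        linarith
    have hmono2 : ∫ y, ∫ d, G (d, y) ∂μ ∂pik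
        ≤ ∫ y, Bf.indicator (fun y => w (xk y) - δ) y ∂pik := by
      refine integral_mono_of_nonneg ?_ hRHSint ?_
      · filter_upwards with y
        rw [hinner y]
        exact Set.indicator_nonneg
          (fun y _ => integral_nonneg fun d => hw_nonneg _) y
      · filter_upwards with y
        rw [hinner y]
        exact hbound y
    have hRHS : ∫ y, Bf.indicator (fun y => w (xk y) - δ) y ∂pik
        = (∫ y in Bf, w (xk y) ∂pik) - δ * (pik Bf).toReal := by
      rw [integral_indicator hBfm]
      have int1 : Integrable (fun y => w (xk y)) (pik.restrict Bf) := by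
        refine (integrable_const C').mono'
          ((hw_meas.comp hxkm)).aestronglyMeasurable ?_
        filter_upwards with y using by simpa [Real.norm_eq_abs] using hw_abs (xk y)
      rw [integral_sub int1 (integrable_const δ), setIntegral_const]
      simp [mul_comm, Measure.real]
    have hSk : ∫ y in Bf, w (xk y) ∂pik = S k := by
      have hFm : Measurable fun y => Bf.indicator (fun y => w (xk y)) y := by
        exact (hw_meas.comp hxkm).indicator hBfm
      rw [← integral_indicator hBfm, ← hmapk,
        integral_map hpkm.aemeasurable hFm.aestronglyMeasurable]
      rw [show S k = ∫ π, (B k).indicator (fun π => w (traj f x0 π k)) π ∂Pinf from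
        (integral_indicator (hBmeas k)).symm]
      apply integral_congr_ae
      filter_upwards with π
      by_cases hπ : π ∈ B k
      · rw [Set.indicator_of_mem ((hmem π).mpr hπ), Set.indicator_of_mem hπ, hxkval]
      · rw [Set.indicator_of_notMem (fun h => hπ ((hmem π).mp h)),
          Set.indicator_of_notMem hπ]
    have hPBk : pik Bf = Pinf (B k) := by
      rw [← hmapk, Measure.map_apply hpkm hBfm]
      congr 1
      ext π
      exact hmem π
    have hsub : S (k + 1) ≤ ∫ π in B k, w (traj f x0 π (k + 1)) ∂Pinf := by
      refine setIntegral_mono_set ((hint_k (k + 1)).integrableOn)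
        (Eventually.of_forall fun π => hw_nonneg _) ?_
      refine HasSubset.Subset.eventuallyLE ?_
      intro π hπ j hj
      exact hπ j (hj.trans (Nat.le_succ k))
    calc S (k + 1) ≤ ∫ π in B k, w (traj f x0 π (k + 1)) ∂Pinf := hsub
      _ = ∫ z, G z ∂(μ.prod pik) := hT1
      _ = ∫ y, ∫ d, G (d, y) ∂μ ∂pik := hfub
      _ ≤ ∫ y, Bf.indicator (fun y => w (xk y) - δ) y ∂pik := hmono2
      _ = (∫ y in Bf, w (xk y) ∂pik) - δ * (pik Bf).toReal := hRHS
      _ = S k - δ * (Pinf (B k)).toReal := by rw [hSk, hPBk]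
  -- conclude: the probability of staying safe forever is zero
  set T : Set (ℕ → Fin m → ℝ) := {π | ∀ k : ℕ, traj f x0 π k ∈ X} with hT
  have hTB : ∀ k, T ⊆ B k := fun k π h j _ => h j
  set t : ℝ := (Pinf T).toReal with ht
  have ht0 : 0 ≤ t := ENNReal.toReal_nonneg
  have htB : ∀ k, t ≤ (Pinf (B k)).toReal := fun k =>
    ENNReal.toReal_mono (measure_ne_top _ _) (measure_mono (hTB k))
  have hind : ∀ k : ℕ, S k ≤ C' - k * (δ * t) := by
    intro k
    induction k with
    | zero => simpa using hS0
    | succ k ih =>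
        have h1 := claim1 k
        have h2 : δ * t ≤ δ * (Pinf (B k)).toReal :=
          mul_le_mul_of_nonneg_left (htB k) hδ.le
        have : S (k + 1) ≤ (C' - k * (δ * t)) - δ * t := by linarith
        calc S (k + 1) ≤ (C' - k * (δ * t)) - δ * t := this
          _ = C' - (k + 1 : ℕ) * (δ * t) := by push_cast; ring
  have hbound : ∀ k : ℕ, (k : ℝ) * (δ * t) ≤ C' := by
    intro k
    have := hind k
    have := hS_nonneg k
    linarith
  have htz : t = 0 := by
    by_contra hne
    have htpos : 0 < t := lt_of_le_of_ne ht0 (Ne.symm hne)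
    have hδt : 0 < δ * t := mul_pos hδ htpos
    obtain ⟨k, hk⟩ := exists_nat_gt (C' / (δ * t))
    have : C' < (k : ℝ) * (δ * t) := by
      rw [div_lt_iff₀ hδt] at hk
      linarith
    linarith [hbound k]
  have hfin : Pinf T ≠ ⊤ := measure_ne_top _ _
  rcases (ENNReal.toReal_eq_zero_iff _).mp htz with h | h
  · exact h
  · exact absurd h hfin
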